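/- Let E, F be finite-dimensional real inner product spaces, f : E → ℝ and g : F → ℝ convex and lower semicontinuous, τ, σ, θ > 0, μ_x, μ_y ≥ 0, and let Ψ : E × F → ℝ be differentiable such that: for every y ∈ F the map x ↦ Ψ(x,y) is μ_x-strongly convex; for every x ∈ E the map y ↦ Ψ(x,y) is μ_y-strongly concave; ‖∇_xΨ(x,y) − ∇_xΨ(x′,y′)‖ ≤ L′_xx‖x−x′‖ + L_xy‖y−y′‖; and ‖∇_yΨ(x,y) − ∇_yΨ(x′,y′)‖ ≤ L_yx‖x−x′‖ + L_yy‖y−y′‖ for all x,x′ ∈ E, y,y′ ∈ F. Given points x₋, x₀ ∈ E, y₋, y₀ ∈ F and vectors s̃ ∈ F, ĝ ∈ E, define y₁ = prox_{σg}(y₀ + σ·s̃), x₁ = prox_{τf}(x₀ − τ·ĝ), q₀ = ∇_yΨ(x₀,y₀) − ∇_yΨ(x₋,y₋), q₁ = ∇_yΨ(x₁,y₁) − ∇_yΨ(x₀,y₀), s₀ = ∇_yΨ(x₀,y₀) + θ·q₀, and L(x,y) = f(x) + Ψ(x,y) − g(y). Then for all x ∈ E and y ∈ F: L(x₁, y)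 − L(x, y₁) ≤ −⟨q₁, y₁ − y⟩ + θ⟨q₀, y₀ − y⟩ + [(1/(2τ) − μ_x/2)‖x − x₀‖² + (1/(2σ))‖y − y₀‖²] − [(1/(2τ))‖x − x₁‖² + (1/(2σ) + μ_y/2)‖y − y₁‖²] + [(L′_xx/2 − 1/(2τ))‖x₁ − x₀‖² − (1/(2σ))‖y₁ − y₀‖² + θ·L_yx·‖x₀ − x₋‖·‖y₁ − y₀‖ + θ·L_yy·‖y₀ − y₋‖·‖y₁ − y₀‖] + ⟨ĝ − ∇_xΨ(x₀, y₁), x − x₁⟩ + ⟨s̃ − s₀, y₁ − y⟩. -/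

import Mathlib

/-!
Sum six standard inequalities: the three-point inequality of each proximal step (the proximal
objective is strongly convex, so its minimiser has quadratic growth), the strong-convexity lower
bound for `Ψ(·, y₁)` at `x₀`, the descent lemma for `Ψ(·, y₁)` from `x₀` to `x₁`, the
strong-concavity upper bound for `Ψ(x₁, ·)` at `y₁`, and Cauchy–Schwarz with the Lipschitz bound
on the momentum term `θ⟪q₀, y₁ - y₀⟫`. Adding them and expanding the inner products gives the
claim.
-/

open RealInnerProductSpace Set AffineMap Filter

section InnerProductSpace

variable {E : Type*} [NormedAddCommGroup E] [InnerProductSpace ℝ E]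

section Gradient
variable [CompleteSpace E] {h : E → ℝ} {h' : E} {x y : E}

theorem HasGradientAt.hasDerivAt_comp_lineMap {t : ℝ}
    (hh : HasGradientAt h h' (lineMap x y t)) :
    HasDerivAt (fun s : ℝ => h (lineMap x y s)) ⟪h', y - x⟫ t := by
  have := (hasGradientAt_iff_hasFDerivAt.mp hh).comp_hasDerivAt t hasDerivAt_lineMap
  rwa [InnerProductSpace.toDual_apply_apply] at this

theorem HasGradientAt.neg (hh : HasGradientAt h h' x) : HasGradientAt (fun z => -h z) (-h') x := by
  rw [hasGradientAt_iff_hasFDerivAt, map_neg]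
  exact (hasGradientAt_iff_hasFDerivAt.mp hh).neg

theorem HasGradientAt.sub_half_mul_norm_sq {m : ℝ} (hh : HasGradientAt h h' x) :
    HasGradientAt (fun z => h z - m / 2 * ‖z‖ ^ 2) (h' - m • x) x := by
  rw [hasGradientAt_iff_hasFDerivAt] at hh ⊢
  refine (hh.sub ((hasStrictFDerivAt_norm_sq x).hasFDerivAt.const_mul (m / 2))).congr_fderiv ?_
  ext v
  simp only [sub_apply, InnerProductSpace.toDual_apply_apply, smul_apply, coe_innerSL_apply,
    nsmul_eq_mul, Nat.cast_ofNat, smul_eq_mul, map_sub, map_smul, sub_right_inj]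
  ring

theorem ConvexOn.add_inner_le_of_hasGradientAt {s : Set E} (hc : ConvexOn ℝ s h) (hx : x ∈ s)
    (hy : y ∈ s) (hh : HasGradientAt h h' x) : h x + ⟪h', y - x⟫ ≤ h y := by
  have h0 : HasGradientAt h h' (lineMap x y (0 : ℝ)) := by rwa [lineMap_apply_zero]
  have hslope := (hc.comp_affineMap (lineMap x y)).le_slope_of_hasDerivAt
    (by simpa using hx) (by simpa using hy) one_pos h0.hasDerivAt_comp_lineMap
  simp only [slope_def_field, Function.comp_apply, lineMap_apply_one, lineMap_apply_zero,
    sub_zero, div_one] at hslope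
  linarith

theorem StrongConvexOn.add_inner_add_le_of_hasGradientAt {s : Set E} {m : ℝ}
    (hc : StrongConvexOn s m h) (hx : x ∈ s) (hy : y ∈ s) (hh : HasGradientAt h h' x) :
    h x + ⟪h', y - x⟫ + m / 2 * ‖y - x‖ ^ 2 ≤ h y := by
  have := (strongConvexOn_iff_convex.mp hc).add_inner_le_of_hasGradientAt hx hy
    hh.sub_half_mul_norm_sq
  rw [inner_sub_left, real_inner_smul_left] at this
  have hy2 : ‖y‖ ^ 2 = ‖x‖ ^ 2 + 2 * ⟪x, y - x⟫ + ‖y - x‖ ^ 2 := by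
    rw [← norm_add_sq_real, add_sub_cancel]
  rw [hy2] at this
  linarith

theorem le_add_inner_add_of_hasGradientAt_of_lipschitz {h' : E → E} {L : ℝ}
    (hh : ∀ z, HasGradientAt h (h' z) z) (hlip : ∀ a b, ‖h' a - h' b‖ ≤ L * ‖a - b‖) (x y : E) :
    h y ≤ h x + ⟪h' x, y - x⟫ + L / 2 * ‖y - x‖ ^ 2 := by
  have hderiv (t : ℝ) := (hh (lineMap x y t)).hasDerivAt_comp_lineMap
  have hbound : ∀ t ∈ Ico (0 : ℝ) 1,
      ⟪h' (lineMap x y t), y - x⟫ ≤ ⟪h' x, y - x⟫ + L * t * ‖y - x‖ ^ 2 := by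
    rintro t ⟨ht, -⟩
    have hdist : ‖lineMap x y t - x‖ = t * ‖y - x‖ := by
      rw [lineMap_apply_module', add_sub_cancel_right, norm_smul, Real.norm_of_nonneg ht]
    calc ⟪h' (lineMap x y t), y - x⟫
        = ⟪h' x, y - x⟫ + ⟪h' (lineMap x y t) - h' x, y - x⟫ := by rw [inner_sub_left]; ring
      _ ≤ ⟪h' x, y - x⟫ + ‖h' (lineMap x y t) - h' x‖ * ‖y - x‖ := by
        gcongr; exact real_inner_le_norm _ _
      _ ≤ ⟪h' x, y - x⟫ + L * (t * ‖y - x‖) * ‖y - x‖ := by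
        gcongr; exact hdist ▸ hlip _ _
      _ = ⟪h' x, y - x⟫ + L * t * ‖y - x‖ ^ 2 := by ring
  have hB (t : ℝ) : HasDerivAt (fun s => h x + s * ⟪h' x, y - x⟫ + L / 2 * s ^ 2 * ‖y - x‖ ^ 2)
      (⟪h' x, y - x⟫ + L * t * ‖y - x‖ ^ 2) t := by
    have := (((hasDerivAt_id t).mul_const ⟪h' x, y - x⟫).const_add (h x)).add
      (((hasDerivAt_pow 2 t).const_mul (L / 2)).mul_const (‖y - x‖ ^ 2))
    exact this.congr_deriv (by simp only [Nat.reduceSub, pow_one, Nat.cast_ofNat]; ring)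
  have hfence := image_le_of_deriv_right_le_deriv_boundary
    (fun t _ => (hderiv t).continuousAt.continuousWithinAt) (fun t _ => (hderiv t).hasDerivWithinAt)
    (by simp) (fun t _ => (hB t).continuousAt.continuousWithinAt)
    (fun t _ => (hB t).hasDerivWithinAt) hbound (right_mem_Icc.mpr zero_le_one)
  simpa using hfence

end Gradient

theorem StrongConvexOn.add_le_of_isMinOn {s : Set E} {m : ℝ} {h : E → ℝ} {x₁ x : E}
    (hc : StrongConvexOn s m h) (hmin : IsMinOn h s x₁) (hx₁ : x₁ ∈ s) (hx : x ∈ s) :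
    h x₁ + m / 2 * ‖x - x₁‖ ^ 2 ≤ h x := by
  -- compare `h x₁` with `h` at `(1 - t) • x₁ + t • x`, divide by `t` and let `t → 0⁺`
  have hseg : ∀ t ∈ Ioo (0 : ℝ) 1, h x₁ + (1 - t) * (m / 2 * ‖x - x₁‖ ^ 2) ≤ h x := by
    rintro t ⟨ht0, ht1⟩
    have hcomb := hc.2 hx₁ hx (sub_nonneg.mpr ht1.le) ht0.le (sub_add_cancel 1 t)
    have hle := isMinOn_iff.mp hmin _
      (hc.1 hx₁ hx (sub_nonneg.mpr ht1.le) ht0.le (sub_add_cancel 1 t))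
    rw [norm_sub_rev] at hcomb
    simp only [smul_eq_mul] at hcomb
    have : t * (h x₁ + (1 - t) * (m / 2 * ‖x - x₁‖ ^ 2)) ≤ t * h x := by linarith
    exact le_of_mul_le_mul_left this ht0
  have hcont : Continuous fun t : ℝ => h x₁ + (1 - t) * (m / 2 * ‖x - x₁‖ ^ 2) := by fun_prop
  have hlim := tendsto_nhdsWithin_of_tendsto_nhds (s := Ioi 0)
    (hcont.tendsto' 0 (h x₁ + m / 2 * ‖x - x₁‖ ^ 2) (by simp))
  exact le_of_tendsto hlim (eventually_of_mem (Ioo_mem_nhdsGT one_pos) hseg)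

theorem ConvexOn.strongConvexOn_add_mul_sq_norm_sub {s : Set E} {f : E → ℝ} (hf : ConvexOn ℝ s f)
    (c : ℝ) (z : E) : StrongConvexOn s (2 * c) (fun w => f w + c * ‖w - z‖ ^ 2) := by
  -- `c * ‖w - z‖ ^ 2 - c * ‖w‖ ^ 2` is affine in `w`
  rw [strongConvexOn_iff_convex]
  refine (hf.add ((((-(2 * c)) • innerₛₗ ℝ z).convexOn hf.1).add_const
    (c * ‖z‖ ^ 2))).congr fun w _ => ?_
  simp only [Pi.add_apply, LinearMap.smul_apply, coe_innerₛₗ_apply, smul_eq_mul]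
  rw [norm_sub_sq_real, real_inner_comm]
  ring

theorem ConvexOn.three_point_of_isMinOn {s : Set E} {f : E → ℝ} (hf : ConvexOn ℝ s f) {τ : ℝ}
    (hτ : τ ≠ 0) {x₀ v x₁ x : E}
    (hmin : IsMinOn (fun w => f w + 1 / (2 * τ) * ‖w - (x₀ - τ • v)‖ ^ 2) s x₁)
    (hx₁ : x₁ ∈ s) (hx : x ∈ s) :
    f x₁ - f x ≤ ⟪v, x - x₁⟫ + 1 / (2 * τ) * (‖x - x₀‖ ^ 2 - ‖x - x₁‖ ^ 2 - ‖x₁ - x₀‖ ^ 2) := by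
  have hgrowth :=
    (hf.strongConvexOn_add_mul_sq_norm_sub (1 / (2 * τ)) (x₀ - τ • v)).add_le_of_isMinOn hmin hx₁ hx
  have hexpand (w : E) : 1 / (2 * τ) * ‖w - (x₀ - τ • v)‖ ^ 2
      = 1 / (2 * τ) * ‖w - x₀‖ ^ 2 + ⟪v, w - x₀⟫ + τ / 2 * ‖v‖ ^ 2 := by
    rw [sub_sub_eq_add_sub, add_sub_right_comm, norm_add_sq_real, real_inner_smul_right,
      norm_smul, mul_pow, Real.norm_eq_abs, sq_abs, real_inner_comm]
    field_simp
  have hsplit : ⟪v, x - x₀⟫ = ⟪v, x - x₁⟫ + ⟪v, x₁ - x₀⟫ := by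
    rw [← inner_add_right, sub_add_sub_cancel]
  simp only [hexpand] at hgrowth
  linarith

end InnerProductSpace

theorem sapd_one_step_inequality_general
    {E F : Type*} [NormedAddCommGroup E] [InnerProductSpace ℝ E] [FiniteDimensional ℝ E]
    [NormedAddCommGroup F] [InnerProductSpace ℝ F] [FiniteDimensional ℝ F]
    (f : E → ℝ) (g : F → ℝ)
    (hf : ConvexOn ℝ Set.univ f) (hg : ConvexOn ℝ Set.univ g)
    (τ σ θ : ℝ) (hτ : 0 < τ) (hσ : 0 < σ) (hθ : 0 < θ)
    (μx μy : ℝ)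
    (L'xx Lxy Lyx Lyy : ℝ)
    (Ψ : E → F → ℝ)
    (hdx : ∀ y : F, Differentiable ℝ (fun x => Ψ x y))
    (hdy : ∀ x : E, Differentiable ℝ (Ψ x))
    (hsc : ∀ y : F, ConvexOn ℝ Set.univ (fun x => Ψ x y - μx / 2 * ‖x‖ ^ 2))
    (hscc : ∀ x : E, ConvexOn ℝ Set.univ (fun y => -Ψ x y - μy / 2 * ‖y‖ ^ 2))
    (hlipx : ∀ x x' : E, ∀ y y' : F,
      ‖gradient (fun z => Ψ z y) x - gradient (fun z => Ψ z y') x'‖ ≤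
        L'xx * ‖x - x'‖ + Lxy * ‖y - y'‖)
    (hlipy : ∀ x x' : E, ∀ y y' : F,
      ‖gradient (Ψ x) y - gradient (Ψ x') y'‖ ≤ Lyx * ‖x - x'‖ + Lyy * ‖y - y'‖)
    (xm x₀ x₁ : E) (ym y₀ y₁ : F) (stil : F) (ghat : E)
    (hy₁ : IsMinOn (fun w => g w + 1 / (2 * σ) * ‖w - (y₀ + σ • stil)‖ ^ 2) Set.univ y₁)
    (hx₁ : IsMinOn (fun w => f w + 1 / (2 * τ) * ‖w - (x₀ - τ • ghat)‖ ^ 2) Set.univ x₁) :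
    ∀ (x : E) (y : F),
      (f x₁ + Ψ x₁ y - g y) - (f x + Ψ x y₁ - g y₁) ≤
        -⟪gradient (Ψ x₁) y₁ - gradient (Ψ x₀) y₀, y₁ - y⟫
        + θ * ⟪gradient (Ψ x₀) y₀ - gradient (Ψ xm) ym, y₀ - y⟫
        + ((1 / (2 * τ) - μx / 2) * ‖x - x₀‖ ^ 2 + 1 / (2 * σ) * ‖y - y₀‖ ^ 2)
        - (1 / (2 * τ) * ‖x - x₁‖ ^ 2 + (1 / (2 * σ) + μy / 2) * ‖y - y₁‖ ^ 2)
        + ((L'xx / 2 - 1 / (2 * τ)) * ‖x₁ - x₀‖ ^ 2 - 1 / (2 * σ) * ‖y₁ - y₀‖ ^ 2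
            + θ * Lyx * ‖x₀ - xm‖ * ‖y₁ - y₀‖ + θ * Lyy * ‖y₀ - ym‖ * ‖y₁ - y₀‖)
        + ⟪ghat - gradient (fun z => Ψ z y₁) x₀, x - x₁⟫
        + ⟪stil - (gradient (Ψ x₀) y₀
            + θ • (gradient (Ψ x₀) y₀ - gradient (Ψ xm) ym)), y₁ - y⟫ := by
  intro x y
  have hproxx := hf.three_point_of_isMinOn hτ.ne' hx₁ (mem_univ _) (mem_univ x)
  have hproxy := hg.three_point_of_isMinOn hσ.ne' (v := -stil)
    (by simpa only [smul_neg, sub_neg_eq_add] using hy₁) (mem_univ _) (mem_univ y)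
  have hconvx := (strongConvexOn_iff_convex.mpr (hsc y₁)).add_inner_add_le_of_hasGradientAt
    (mem_univ x₀) (mem_univ x) (hdx y₁ x₀).hasGradientAt
  have hdescx := le_add_inner_add_of_hasGradientAt_of_lipschitz
    (fun z => (hdx y₁ z).hasGradientAt) (fun a b => by simpa using hlipx a b y₁ y₁) x₀ x₁
  have hconcy := (strongConvexOn_iff_convex.mpr (hscc x₁)).add_inner_add_le_of_hasGradientAt
    (mem_univ y₁) (mem_univ y) (hdy x₁ y₁).hasGradientAt.neg
  have hmomentum : θ * ⟪gradient (Ψ x₀) y₀ - gradient (Ψ xm) ym, y₁ - y₀⟫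
      ≤ θ * ((Lyx * ‖x₀ - xm‖ + Lyy * ‖y₀ - ym‖) * ‖y₁ - y₀‖) :=
    mul_le_mul_of_nonneg_left
      ((real_inner_le_norm _ _).trans (by gcongr; exact hlipy x₀ xm y₀ ym)) hθ.le
  simp only [inner_sub_left, inner_sub_right, inner_add_left, inner_neg_left,
    real_inner_smul_left] at hproxx hproxy hconvx hdescx hconcy hmomentum ⊢
  linarith

/-- One-step SAPD inequality: for one (possibly inexact) SAPD iteration
`y₁ = prox_{σg}(y₀ + σ s̃)`, `x₁ = prox_{τf}(x₀ − τ ĝ)` applied to the strongly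
convex–strongly concave Lagrangian `L(x,y) = f(x) + Ψ(x,y) − g(y)`, the gap
`L(x₁,y) − L(x,y₁)` is bounded by the stated quadratic-plus-error expression. -/
theorem sapd_one_step_inequality
    {E F : Type*} [NormedAddCommGroup E] [InnerProductSpace ℝ E] [FiniteDimensional ℝ E]
    [NormedAddCommGroup F] [InnerProductSpace ℝ F] [FiniteDimensional ℝ F]
    (f : E → ℝ) (g : F → ℝ)
    (hf : ConvexOn ℝ Set.univ f) (hg : ConvexOn ℝ Set.univ g)
    (hflsc : LowerSemicontinuous f) (hglsc : LowerSemicontinuous g)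
    (τ σ θ : ℝ) (hτ : 0 < τ) (hσ : 0 < σ) (hθ : 0 < θ)
    (μx μy : ℝ) (hμx : 0 ≤ μx) (hμy : 0 ≤ μy)
    (L'xx Lxy Lyx Lyy : ℝ)
    (Ψ : E → F → ℝ)
    (hdx : ∀ y : F, Differentiable ℝ (fun x => Ψ x y))
    (hdy : ∀ x : E, Differentiable ℝ (Ψ x))
    (hsc : ∀ y : F, ConvexOn ℝ Set.univ (fun x => Ψ x y - μx / 2 * ‖x‖ ^ 2))
    (hscc : ∀ x : E, ConvexOn ℝ Set.univ (fun y => -Ψ x y - μy / 2 * ‖y‖ ^ 2))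
    (hlipx : ∀ x x' : E, ∀ y y' : F,
      ‖gradient (fun z => Ψ z y) x - gradient (fun z => Ψ z y') x'‖ ≤
        L'xx * ‖x - x'‖ + Lxy * ‖y - y'‖)
    (hlipy : ∀ x x' : E, ∀ y y' : F,
      ‖gradient (Ψ x) y - gradient (Ψ x') y'‖ ≤ Lyx * ‖x - x'‖ + Lyy * ‖y - y'‖)
    (xm x₀ x₁ : E) (ym y₀ y₁ : F) (stil : F) (ghat : E)
    (hy₁ : IsMinOn (fun w => g w + 1 / (2 * σ) * ‖w - (y₀ + σ • stil)‖ ^ 2) Set.univ y₁)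
    (hx₁ : IsMinOn (fun w => f w + 1 / (2 * τ) * ‖w - (x₀ - τ • ghat)‖ ^ 2) Set.univ x₁) :
    ∀ (x : E) (y : F),
      (f x₁ + Ψ x₁ y - g y) - (f x + Ψ x y₁ - g y₁) ≤
        -⟪gradient (Ψ x₁) y₁ - gradient (Ψ x₀) y₀, y₁ - y⟫
        + θ * ⟪gradient (Ψ x₀) y₀ - gradient (Ψ xm) ym, y₀ - y⟫
        + ((1 / (2 * τ) - μx / 2) * ‖x - x₀‖ ^ 2 + 1 / (2 * σ) * ‖y - y₀‖ ^ 2)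
        - (1 / (2 * τ) * ‖x - x₁‖ ^ 2 + (1 / (2 * σ) + μy / 2) * ‖y - y₁‖ ^ 2)
        + ((L'xx / 2 - 1 / (2 * τ)) * ‖x₁ - x₀‖ ^ 2 - 1 / (2 * σ) * ‖y₁ - y₀‖ ^ 2
            + θ * Lyx * ‖x₀ - xm‖ * ‖y₁ - y₀‖ + θ * Lyy * ‖y₀ - ym‖ * ‖y₁ - y₀‖)
        + ⟪ghat - gradient (fun z => Ψ z y₁) x₀, x - x₁⟫
        + ⟪stil - (gradient (Ψ x₀) y₀
            + θ • (gradient (Ψ x₀) y₀ - gradient (Ψ xm) ym)), y₁ - y⟫ :=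
  sapd_one_step_inequality_general f g hf hg τ σ θ hτ hσ hθ μx μy L'xx Lxy Lyx Lyy Ψ hdx hdy hsc
    hscc hlipx hlipy xm x₀ x₁ ym y₀ y₁ stil ghat hy₁ hx₁
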